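/- arXiv:2008.04206 — 2 statements merged into one kernel-verified Lean document; each statement's English description precedes it below -/
import Mathlib

section
/- Under assumptions (B1)–(B2), suppose the two-level penalty method (DPM) is run: at stage s, starting from u^{s−1}, the forward-backward splitting iterate x^{k+1} = y_{α,e^s}(x^k) (with step size 0 < α ≤ 1/(β + 2/τ), β ∈ (0,1), τ ≥ 1) is applied to the penalized objective φ(·, e^s) = h(·, e^s) + p until ‖x^{k+1} − x^k‖ ≤ θ_s, giving u^s = x^{k+1}. If ε_i^s ↓ 0, ε_i^s/ε_j^s → 1 for i ≠ j, and θ_s/ε_j^s → 0 for all j, then each stage terminates in finitely many iterations, the sequence {u^s} is bounded, and every limit point of {u^s} solves min_{x ∈ argmin_X p} f(x). -/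
open Filter RealInnerProductSpace

/-- The i-th block of a vector x ∈ ℝ^{nm}. -/
noncomputable def blk {m n : ℕ} (x : EuclideanSpace ℝ (Fin m × Fin n)) (i : Fin m) :
    EuclideanSpace ℝ (Fin n) :=
  (WithLp.equiv 2 (Fin n → ℝ)).symm fun j => x (i, j)

/-- The cycle consensus penalty. -/
noncomputable def cyclePenalty {m n : ℕ} [NeZero m] (τ : ℝ)
    (x : EuclideanSpace ℝ (Fin m × Fin n)) : ℝ :=
  (2 * τ)⁻¹ * ∑ i : Fin m, ‖blk x i - blk x (i + 1)‖ ^ 2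


set_option linter.unusedSectionVars false
set_option maxHeartbeats 1600000

section auxDPM
variable {m n : ℕ} [NeZero m]

local notation "E'" => EuclideanSpace ℝ (Fin m × Fin n)

lemma blk_apply (x : E') (i : Fin m) (j : Fin n) : blk x i j = x (i, j) := rfl

lemma norm_sq_eq_sum_blk (x : E') : ‖x‖ ^ 2 = ∑ i, ‖blk x i‖ ^ 2 := by
  have h1 : ‖x‖ ^ 2 = ∑ p : Fin m × Fin n, ‖x p‖ ^ 2 := by
    rw [EuclideanSpace.norm_eq, Real.sq_sqrt (by positivity)]
  have h2 : ∀ i : Fin m, ‖blk x i‖ ^ 2 = ∑ j : Fin n, ‖x (i, j)‖ ^ 2 := fun i => by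
    rw [EuclideanSpace.norm_eq, Real.sq_sqrt (by positivity)]; rfl
  simp only [h1, h2, Fintype.sum_prod_type]

lemma norm_blk_le (x : E') (i : Fin m) : ‖blk x i‖ ≤ ‖x‖ := by
  have := norm_sq_eq_sum_blk x
  nlinarith [Finset.single_le_sum (f := fun i => ‖blk x i‖ ^ 2) (fun i _ => by positivity)
    (Finset.mem_univ i), norm_nonneg x, norm_nonneg (blk x i)]

noncomputable def glue {m n : ℕ} (v : Fin m → EuclideanSpace ℝ (Fin n)) :
    EuclideanSpace ℝ (Fin m × Fin n) :=
  (WithLp.equiv 2 (Fin m × Fin n → ℝ)).symm fun p => v p.1 p.2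

lemma blk_glue (v : Fin m → EuclideanSpace ℝ (Fin n)) (i : Fin m) : blk (glue v) i = v i := by
  ext j; rfl

lemma blk_combo (x y : E') (t : ℝ) (i : Fin m) :
    blk ((1-t) • x + t • y) i = (1-t) • blk x i + t • blk y i := by
  ext j; rfl

lemma blk_combo' (x y : E') (a b : ℝ) (i : Fin m) :
    blk (a • x + b • y) i = a • blk x i + b • blk y i := by
  ext j; rfl

lemma blk_continuous (i : Fin m) : Continuous fun x : E' => blk x i := by
  unfold blk
  exact (PiLp.continuous_toLp 2 _).comp
    (continuous_pi fun j => (continuous_apply (i, j)).comp (PiLp.continuous_ofLp 2 _))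

noncomputable def Tclm (m n : ℕ) [NeZero m] :
    EuclideanSpace ℝ (Fin m × Fin n) →L[ℝ] EuclideanSpace ℝ (Fin m × Fin n) :=
  LinearMap.toContinuousLinearMap
    { toFun := fun x => (WithLp.equiv 2 (Fin m × Fin n → ℝ)).symm
        fun p => x p - x (p.1 + 1, p.2)
      map_add' := by intro x y; ext p; show (x+y) p - (x+y) _ = _; simp; ring
      map_smul' := by intro c x; ext p; show c • x p - (c • x) _ = _; simp; ring }

lemma blk_Tclm (x : E') (i : Fin m) : blk (Tclm m n x) i = blk x i - blk x (i + 1) := by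
  ext j; rfl

lemma cyclePenalty_eq (τ : ℝ) (x : E') : cyclePenalty τ x = (2 * τ)⁻¹ * ‖Tclm m n x‖ ^ 2 := by
  rw [cyclePenalty, norm_sq_eq_sum_blk]
  simp only [blk_Tclm]

lemma sum_blk_shift (x : E') : ∑ i : Fin m, ‖blk x (i + 1)‖ ^ 2 = ∑ i : Fin m, ‖blk x i‖ ^ 2 :=
  Fintype.sum_equiv (Equiv.addRight (1 : Fin m)) _ _ (fun _ => rfl)

lemma norm_Tclm_le (x : E') : ‖Tclm m n x‖ ≤ 2 * ‖x‖ := by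
  have h : ‖Tclm m n x‖ ^ 2 ≤ (2 * ‖x‖) ^ 2 := by
    rw [norm_sq_eq_sum_blk]
    simp only [blk_Tclm]
    have hb : ∀ i : Fin m, ‖blk x i - blk x (i + 1)‖ ^ 2 ≤
        2 * ‖blk x i‖ ^ 2 + 2 * ‖blk x (i + 1)‖ ^ 2 := by
      intro i
      have := norm_sub_le (blk x i) (blk x (i + 1))
      nlinarith [this, sq_nonneg (‖blk x i‖ - ‖blk x (i + 1)‖),
        norm_nonneg (blk x i - blk x (i+1)), norm_nonneg (blk x i), norm_nonneg (blk x (i+1))]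
    calc ∑ i : Fin m, ‖blk x i - blk x (i + 1)‖ ^ 2
        ≤ ∑ i : Fin m, (2 * ‖blk x i‖ ^ 2 + 2 * ‖blk x (i + 1)‖ ^ 2) :=
          Finset.sum_le_sum fun i _ => hb i
      _ = 4 * ‖x‖ ^ 2 := by
          rw [Finset.sum_add_distrib, ← Finset.mul_sum, ← Finset.mul_sum, sum_blk_shift,
            ← norm_sq_eq_sum_blk]; ring
      _ = (2 * ‖x‖) ^ 2 := by ring
  nlinarith [norm_nonneg (Tclm m n x), norm_nonneg x]

lemma norm_Tclm_adj_le (w : E') : ‖ContinuousLinearMap.adjoint (Tclm m n) w‖ ≤ 2 * ‖w‖ := by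
  set v := ContinuousLinearMap.adjoint (Tclm m n) w with hv
  have h : ‖v‖ ^ 2 ≤ 2 * ‖w‖ * ‖v‖ := by
    have h1 : ‖v‖ ^ 2 = ⟪v, v⟫ := (real_inner_self_eq_norm_sq v).symm
    rw [h1, hv, ContinuousLinearMap.adjoint_inner_left]
    calc ⟪w, Tclm m n v⟫ ≤ ‖w‖ * ‖Tclm m n v‖ := real_inner_le_norm _ _
      _ ≤ ‖w‖ * (2 * ‖v‖) := mul_le_mul_of_nonneg_left (norm_Tclm_le v) (norm_nonneg w)
      _ = 2 * ‖w‖ * ‖v‖ := by ring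
  rcases eq_or_lt_of_le (norm_nonneg v) with h0 | h0
  · rw [← h0]; positivity
  · nlinarith

noncomputable def gradP (m n : ℕ) [NeZero m] (τ : ℝ) (x : EuclideanSpace ℝ (Fin m × Fin n)) :
    EuclideanSpace ℝ (Fin m × Fin n) :=
  τ⁻¹ • ContinuousLinearMap.adjoint (Tclm m n) (Tclm m n x)

lemma hasGradient_cyclePenalty (τ : ℝ) (hτ : τ ≠ 0) (x : E') :
    HasGradientAt (cyclePenalty τ) (gradP m n τ x) x := by
  rw [hasGradientAt_iff_hasFDerivAt]
  have hT : HasFDerivAt (fun z : E' => Tclm m n z) (Tclm m n) x :=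
    (Tclm m n).hasFDerivAt
  have hD := (hT.inner ℝ hT).const_mul ((2 * τ)⁻¹)
  have hfun : (fun z : E' => (2 * τ)⁻¹ * ⟪Tclm m n z, Tclm m n z⟫) = cyclePenalty τ := by
    funext z
    rw [cyclePenalty_eq, real_inner_self_eq_norm_sq]
  rw [hfun] at hD
  convert hD using 1
  · ext; rfl
  ext h
  simp only [InnerProductSpace.toDual_apply_apply, ContinuousLinearMap.smul_apply,
    ContinuousLinearMap.coe_comp', Function.comp_apply, ContinuousLinearMap.prod_apply,
    fderivInnerCLM_apply, smul_eq_mul]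
  rw [gradP, real_inner_smul_left, ContinuousLinearMap.adjoint_inner_left]
  rw [real_inner_comm (Tclm m n h) (Tclm m n x)]
  field_simp
  ring

lemma penalty_identity (τ : ℝ) (hτ : τ ≠ 0) (x y : E') :
    cyclePenalty τ y = cyclePenalty τ x + ⟪gradP m n τ x, y - x⟫
      + (2 * τ)⁻¹ * ‖Tclm m n (y - x)‖ ^ 2 := by
  have hTy : Tclm m n y = Tclm m n x + Tclm m n (y - x) := by
    rw [← map_add]; congr 1; abel
  rw [cyclePenalty_eq, cyclePenalty_eq, hTy, norm_add_sq_real]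
  rw [gradP, real_inner_smul_left, ContinuousLinearMap.adjoint_inner_left]
  field_simp

lemma gradP_lipschitz (τ : ℝ) (hτ : 0 < τ) (x y : E') :
    ‖gradP m n τ x - gradP m n τ y‖ ≤ 4 / τ * ‖x - y‖ := by
  have h : gradP m n τ x - gradP m n τ y =
      τ⁻¹ • ContinuousLinearMap.adjoint (Tclm m n) (Tclm m n (x - y)) := by
    rw [gradP, gradP, ← smul_sub, map_sub, map_sub]
  rw [h, norm_smul]
  calc ‖τ⁻¹‖ * ‖ContinuousLinearMap.adjoint (Tclm m n) (Tclm m n (x - y))‖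
      ≤ τ⁻¹ * (2 * ‖Tclm m n (x - y)‖) := by
        rw [Real.norm_eq_abs, abs_of_pos (by positivity)]
        exact mul_le_mul_of_nonneg_left (norm_Tclm_adj_le _) (by positivity)
    _ ≤ τ⁻¹ * (2 * (2 * ‖x - y‖)) := by
        have := norm_Tclm_le (m := m) (n := n) (x - y)
        have h2 : (0:ℝ) ≤ τ⁻¹ := by positivity
        nlinarith
    _ = 4 / τ * ‖x - y‖ := by field_simp; ring

lemma hsum_convex (c : Fin m → ℝ) (hc : ∀ i, 0 ≤ c i)
    (f : Fin m → EuclideanSpace ℝ (Fin n) → ℝ) (hf : ∀ i, ConvexOn ℝ Set.univ (f i)) :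
    ∀ x y : E', ∀ t : ℝ, 0 ≤ t → t ≤ 1 →
      (∑ i, c i * f i (blk ((1-t) • x + t • y) i))
        ≤ (1-t) * ∑ i, c i * f i (blk x i) + t * ∑ i, c i * f i (blk y i) := by
  intro x y t ht0 ht1
  rw [Finset.mul_sum, Finset.mul_sum, ← Finset.sum_add_distrib]
  apply Finset.sum_le_sum
  intro i _
  rw [blk_combo]
  have h := (hf i).2 (Set.mem_univ (blk x i)) (Set.mem_univ (blk y i))
    (by linarith : (0:ℝ) ≤ 1 - t) ht0 (by ring)
  have h2 := mul_le_mul_of_nonneg_left h (hc i)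
  simp only [smul_eq_mul] at h2; linarith

end auxDPM

section aux2DPM
variable {E : Type*} [NormedAddCommGroup E] [InnerProductSpace ℝ E]

lemma combo_norm_sq (u z x0 : E) (t : ℝ) :
    ‖((1-t) • u + t • z) - x0‖ ^ 2
      = (1-t) * ‖u - x0‖ ^ 2 + t * ‖z - x0‖ ^ 2 - t * (1-t) * ‖z - u‖ ^ 2 := by
  have hc : ((1-t) • u + t • z) - x0 = (1-t) • (u - x0) + t • (z - x0) := by
    module
  rw [hc, norm_add_sq_real, norm_smul, norm_smul, real_inner_smul_left, real_inner_smul_right]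
  have h1 : ‖z - u‖ ^ 2 = ‖u - x0‖ ^ 2 - 2 * ⟪u - x0, z - x0⟫ + ‖z - x0‖ ^ 2 := by
    have : z - u = (z - x0) - (u - x0) := by abel
    rw [this, norm_sub_sq_real, real_inner_comm]; ring
  rw [h1, mul_pow, mul_pow, Real.norm_eq_abs, Real.norm_eq_abs, sq_abs, sq_abs]
  ring

lemma prox_strong_convexity (Xset : Set E) (hXconv : Convex ℝ Xset)
    (h : E → ℝ)
    (hconv : ∀ x y : E, ∀ t : ℝ, 0 ≤ t → t ≤ 1 →
      h ((1-t) • x + t • y) ≤ (1-t) * h x + t * h y)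
    (g x0 : E) (α : ℝ) (hα : 0 < α)
    (u : E) (hu : u ∈ Xset)
    (hmin : ∀ z ∈ Xset, h u + ⟪g, u⟫ + (2*α)⁻¹ * ‖u - x0‖ ^ 2
      ≤ h z + ⟪g, z⟫ + (2*α)⁻¹ * ‖z - x0‖ ^ 2)
    (z : E) (hz : z ∈ Xset) :
    h u + ⟪g, u⟫ + (2*α)⁻¹ * ‖u - x0‖ ^ 2 + (2*α)⁻¹ * ‖z - u‖ ^ 2
      ≤ h z + ⟪g, z⟫ + (2*α)⁻¹ * ‖z - x0‖ ^ 2 := by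
  set F : E → ℝ := fun w => h w + ⟪g, w⟫ + (2*α)⁻¹ * ‖w - x0‖ ^ 2 with hF
  have key : ∀ t : ℝ, 0 < t → t < 1 → (2*α)⁻¹ * (1-t) * ‖z - u‖ ^ 2 ≤ F z - F u := by
    intro t ht0 ht1
    set w : E := (1-t) • u + t • z with hw
    have hwX : w ∈ Xset := hXconv hu hz (by linarith) (le_of_lt ht0) (by ring)
    have hFw : F w ≤ (1-t) * F u + t * F z - (2*α)⁻¹ * (t * (1-t) * ‖z - u‖ ^ 2) := by
      have h1 := hconv u z t (le_of_lt ht0) (le_of_lt (by linarith))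
      have h2 : ⟪g, w⟫ = (1-t) * ⟪g, u⟫ + t * ⟪g, z⟫ := by
        rw [hw, inner_add_right, real_inner_smul_right, real_inner_smul_right]
      have h3 := combo_norm_sq u z x0 t
      rw [hF]
      simp only [hw] at h1 h3 ⊢
      rw [h2, h3]
      nlinarith [h1]
    have hle : F u ≤ F w := hmin w hwX
    have : F u ≤ (1-t) * F u + t * F z - (2*α)⁻¹ * (t * (1-t) * ‖z - u‖ ^ 2) :=
      le_trans hle hFw
    have h4 : t * ((2*α)⁻¹ * (1-t) * ‖z - u‖ ^ 2) ≤ t * (F z - F u) := by nlinarith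
    exact le_of_mul_le_mul_left (by linarith [h4]) ht0
  have hlim : Tendsto (fun t : ℝ => (2*α)⁻¹ * (1-t) * ‖z - u‖ ^ 2) (nhdsWithin 0 (Set.Ioo 0 1))
      (nhds ((2*α)⁻¹ * ‖z - u‖ ^ 2)) := by
    have : Tendsto (fun t : ℝ => (2*α)⁻¹ * (1-t) * ‖z - u‖ ^ 2) (nhds 0)
        (nhds ((2*α)⁻¹ * (1-0) * ‖z - u‖ ^ 2)) := by
      apply Continuous.tendsto
      continuity
    simp only [sub_zero, mul_one] at this
    exact this.mono_left nhdsWithin_le_nhds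
  have hne : (nhdsWithin (0:ℝ) (Set.Ioo 0 1)).NeBot := by
    apply mem_closure_iff_nhdsWithin_neBot.mp
    rw [closure_Ioo (by norm_num : (0:ℝ) ≠ 1)]
    exact Set.left_mem_Icc.mpr (by norm_num)
  have := le_of_tendsto hlim (eventually_nhdsWithin_of_forall
    (fun t ht => key t ht.1 ht.2))
  linarith [this]

end aux2DPM

/-- Theorem 4.1: convergence of the two-level decentralized penalty method (DPM):
each stage is finite, the sequence {uˢ} is bounded, and all its limit points
solve min { f(x) : x ∈ argmin_X p }. -/
theorem DPM_convergence {m n : ℕ} [NeZero m]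
    (hm : 3 ≤ m) (τ : ℝ) (hτ : 1 ≤ τ)
    (X : Fin m → Set (EuclideanSpace ℝ (Fin n)))
    (hXne : ∀ i, (X i).Nonempty) (hXconv : ∀ i, Convex ℝ (X i))
    (hXcl : ∀ i, IsClosed (X i))
    (f : Fin m → EuclideanSpace ℝ (Fin n) → ℝ)
    (hf : ∀ i, ConvexOn ℝ Set.univ (f i))
    (hcoer : ∀ M : ℝ, ∃ R : ℝ, ∀ x : EuclideanSpace ℝ (Fin m × Fin n),
        (∀ i, blk x i ∈ X i) → R ≤ ‖x‖ → M ≤ ∑ i, f i (blk x i))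
    (hXp : ∃ xbar : EuclideanSpace ℝ (Fin m × Fin n), (∀ i, blk xbar i ∈ X i) ∧
        ∀ y, (∀ i, blk y i ∈ X i) → cyclePenalty τ xbar ≤ cyclePenalty τ y)
    -- the gradient of the penalty p :
    (G : EuclideanSpace ℝ (Fin m × Fin n) → EuclideanSpace ℝ (Fin m × Fin n))
    (hG : ∀ x, HasGradientAt (cyclePenalty (m := m) (n := n) τ) (G x) x)
    -- step-size parameters :
    (β : ℝ) (hβ : β ∈ Set.Ioo (0 : ℝ) 1)
    (α : ℝ) (hα : 0 < α) (hαle : α ≤ 1 / (β + 2 / τ))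
    -- penalty parameters and stopping tolerances :
    (e : ℕ → Fin m → ℝ) (hepos : ∀ s i, 0 < e s i)
    (hmono : ∀ i, Antitone fun s => e s i)
    (hzero : ∀ i, Tendsto (fun s => e s i) atTop (nhds 0))
    (hratio : ∀ i j, i ≠ j → Tendsto (fun s => e s i / e s j) atTop (nhds 1))
    (θ : ℕ → ℝ) (hθpos : ∀ s, 0 < θ s)
    (hθ : ∀ j, Tendsto (fun s => θ s / e s j) atTop (nhds 0))
    -- the sequence of stage outputs: u s = y_{α,eˢ}(xᵏ) with ‖u s − xᵏ‖ ≤ θ s :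
    (u : ℕ → EuclideanSpace ℝ (Fin m × Fin n))
    (hu : ∀ s, ∃ xk : EuclideanSpace ℝ (Fin m × Fin n),
        (∀ i, blk xk i ∈ X i) ∧ (∀ i, blk (u s) i ∈ X i) ∧
        (∀ z, (∀ i, blk z i ∈ X i) →
          (∑ i, e s i * f i (blk (u s) i)) + ⟪G xk, u s⟫ +
              (2 * α)⁻¹ * ‖u s - xk‖ ^ 2 ≤
            (∑ i, e s i * f i (blk z i)) + ⟪G xk, z⟫ +
              (2 * α)⁻¹ * ‖z - xk‖ ^ 2) ∧
        ‖u s - xk‖ ≤ θ s) :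
    -- (i) each stage terminates after finitely many splitting iterations :
    (∀ s, ∀ x : ℕ → EuclideanSpace ℝ (Fin m × Fin n),
        (∀ k, ∀ i, blk (x k) i ∈ X i) →
        (∀ k, ∀ z, (∀ i, blk z i ∈ X i) →
          (∑ i, e s i * f i (blk (x (k+1)) i)) + ⟪G (x k), x (k+1)⟫ +
              (2 * α)⁻¹ * ‖x (k+1) - x k‖ ^ 2 ≤
            (∑ i, e s i * f i (blk z i)) + ⟪G (x k), z⟫ +
              (2 * α)⁻¹ * ‖z - x k‖ ^ 2) →
        ∃ k, ‖x (k+1) - x k‖ ≤ θ s) ∧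
    -- (ii) {u s} is bounded and all its limit points solve min_{argmin p} f :
    (∃ C : ℝ, ∀ s, ‖u s‖ ≤ C) ∧
      ∀ ubar, MapClusterPt ubar atTop u →
        (∀ i, blk ubar i ∈ X i) ∧
        (∀ y, (∀ i, blk y i ∈ X i) → cyclePenalty τ ubar ≤ cyclePenalty τ y) ∧
        (∀ y, (∀ i, blk y i ∈ X i) →
          (∀ w, (∀ i, blk w i ∈ X i) → cyclePenalty τ y ≤ cyclePenalty τ w) →
          ∑ i, f i (blk ubar i) ≤ ∑ i, f i (blk y i)) := by
  classical
  obtain ⟨xbar, hxbarX, hxbarmin⟩ := hXp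
  have hτ0 : (0:ℝ) < τ := lt_of_lt_of_le one_pos hτ
  have hτ0' : τ ≠ 0 := ne_of_gt hτ0
  have hα0' : α ≠ 0 := ne_of_gt hα
  have hβ0 : (0:ℝ) < β := hβ.1
  have hGeq : ∀ x, G x = gradP m n τ x := fun x =>
    (hG x).unique (hasGradient_cyclePenalty τ hτ0' x)
  have hstepsz : β + 2/τ ≤ α⁻¹ := by
    have hB0 : (0:ℝ) < β + 2/τ := by positivity
    have h1 : α * (β + 2/τ) ≤ 1 := by
      have h0 := hαle
      rw [one_div] at h0
      have h2 := mul_le_mul_of_nonneg_right h0 (le_of_lt hB0)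
      rwa [inv_mul_cancel₀ (ne_of_gt hB0)] at h2
    have hainv : α * α⁻¹ = 1 := mul_inv_cancel₀ hα0'
    nlinarith [h1, hainv, hα]
  have ppos : ∀ x : EuclideanSpace ℝ (Fin m × Fin n), 0 ≤ cyclePenalty τ x := fun x => by
    rw [cyclePenalty_eq]; positivity
  have pconv : ∀ x y : EuclideanSpace ℝ (Fin m × Fin n),
      ⟪G x, y - x⟫ ≤ cyclePenalty τ y - cyclePenalty τ x := by
    intro x y
    have h1 := penalty_identity (m := m) (n := n) τ hτ0' x y
    rw [hGeq]
    have h2 : (0:ℝ) ≤ (2*τ)⁻¹ * ‖Tclm m n (y - x)‖^2 := by positivity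
    linarith
  have pdesc : ∀ x y, cyclePenalty τ y
      ≤ cyclePenalty τ x + ⟪G x, y - x⟫ + (2/τ) * ‖y - x‖^2 := by
    intro x y
    have h1 := penalty_identity (m := m) (n := n) τ hτ0' x y
    have h2 : ‖Tclm m n (y - x)‖^2 ≤ 4 * ‖y - x‖^2 := by
      nlinarith [norm_Tclm_le (m := m) (n := n) (y - x),
        norm_nonneg (Tclm m n (y - x)), norm_nonneg (y - x)]
    have h3 : (2*τ)⁻¹ * ‖Tclm m n (y - x)‖^2 ≤ (2/τ) * ‖y - x‖^2 := by
      have h4 : (0:ℝ) ≤ (2*τ)⁻¹ := by positivity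
      have h5 : (2*τ)⁻¹ * (4 * ‖y - x‖^2) = (2/τ) * ‖y - x‖^2 := by
        field_simp; ring
      nlinarith
    rw [hGeq]
    linarith
  have pLip : ∀ x y, ‖G x - G y‖ ≤ 4/τ * ‖x - y‖ := by
    intro x y; rw [hGeq, hGeq]; exact gradP_lipschitz τ hτ0 x y
  have hXXconv : Convex ℝ {x : EuclideanSpace ℝ (Fin m × Fin n) | ∀ i, blk x i ∈ X i} := by
    intro x hx y hy a b ha hb hab i
    rw [blk_combo' x y a b i]
    exact hXconv i (hx i) (hy i) ha hb hab
  have hfc : ∀ i, Continuous (f i) := fun i =>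
    continuousOn_univ.mp ((hf i).continuousOn isOpen_univ)
  -- uniform lower bounds on each block
  have hAex : ∀ i : Fin m, ∃ A : ℝ, 0 ≤ A ∧ ∀ v ∈ X i, -A ≤ f i v := by
    intro i
    obtain ⟨R, hR⟩ := hcoer (∑ j ∈ Finset.univ.erase i, f j (blk xbar j))
    have far : ∀ v ∈ X i, |R| ≤ ‖v‖ → 0 ≤ f i v := by
      intro v hv hnv
      set w : Fin m → EuclideanSpace ℝ (Fin n) := Function.update (fun j => blk xbar j) i v
        with hw
      have hbx : ∀ j, blk (glue w) j = w j := fun j => blk_glue w j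
      have hxX : ∀ j, blk (glue w) j ∈ X j := by
        intro j; rw [hbx]; rcases eq_or_ne j i with rfl | hne
        · simpa [hw] using hv
        · rw [hw, Function.update_of_ne hne]; exact hxbarX j
      have hnx : R ≤ ‖glue w‖ := by
        have h1 : ‖v‖ = ‖blk (glue w) i‖ := by rw [hbx, hw, Function.update_self]
        calc R ≤ |R| := le_abs_self R
          _ ≤ ‖v‖ := hnv
          _ = ‖blk (glue w) i‖ := h1
          _ ≤ ‖glue w‖ := norm_blk_le _ i
      have hsum := hR (glue w) hxX hnx
      have hsplit : ∑ j, f j (blk (glue w) j)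
          = f i v + ∑ j ∈ Finset.univ.erase i, f j (blk xbar j) := by
        rw [← Finset.add_sum_erase Finset.univ _ (Finset.mem_univ i)]
        congr 1
        · rw [hbx, hw, Function.update_self]
        · apply Finset.sum_congr rfl
          intro j hj
          rw [hbx, hw, Function.update_of_ne (Finset.ne_of_mem_erase hj)]
      rw [hsplit] at hsum
      linarith
    have hcpt : IsCompact (X i ∩ Metric.closedBall 0 |R|) :=
      (isCompact_closedBall (0 : EuclideanSpace ℝ (Fin n)) |R|).inter_left (hXcl i)
    obtain ⟨B, hB⟩ := hcpt.exists_bound_of_continuousOn ((hfc i).continuousOn)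
    refine ⟨max B 0, le_max_right _ _, ?_⟩
    intro v hv
    by_cases hball : ‖v‖ ≤ |R|
    · have h1 := hB v ⟨hv, by simpa [Metric.mem_closedBall, dist_zero_right] using hball⟩
      rw [Real.norm_eq_abs] at h1
      have h2 := (abs_le.mp h1).1
      have h3 : B ≤ max B 0 := le_max_left _ _
      linarith
    · have h4 := far v hv (le_of_lt (not_le.mp hball))
      have h3 : (0:ℝ) ≤ max B 0 := le_max_right _ _
      linarith
  choose A hA0 hAlb using hAex
  have huX : ∀ s, ∀ i, blk (u s) i ∈ X i := fun s => ((hu s).choose_spec).2.1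
  -- Part (i)
  have partI : ∀ s, ∀ x : ℕ → EuclideanSpace ℝ (Fin m × Fin n),
      (∀ k, ∀ i, blk (x k) i ∈ X i) →
      (∀ k, ∀ z, (∀ i, blk z i ∈ X i) →
        (∑ i, e s i * f i (blk (x (k+1)) i)) + ⟪G (x k), x (k+1)⟫ +
            (2 * α)⁻¹ * ‖x (k+1) - x k‖ ^ 2 ≤
          (∑ i, e s i * f i (blk z i)) + ⟪G (x k), z⟫ +
            (2 * α)⁻¹ * ‖z - x k‖ ^ 2) →
      ∃ k, ‖x (k+1) - x k‖ ≤ θ s := by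
    intro s x hxX hxmin
    by_contra hcon
    push_neg at hcon
    have hce : ∀ i, (0:ℝ) ≤ e s i := fun i => (hepos s i).le
    have hdec : ∀ k, (∑ i, e s i * f i (blk (x (k+1)) i)) + cyclePenalty τ (x (k+1))
        ≤ (∑ i, e s i * f i (blk (x k) i)) + cyclePenalty τ (x k)
          - β * ‖x (k+1) - x k‖^2 := by
      intro k
      have hsc := prox_strong_convexity _ hXXconv
        (fun z => ∑ i, e s i * f i (blk z i))
        (fun x' y' t ht0 ht1 => hsum_convex (e s) hce f hf x' y' t ht0 ht1)
        (G (x k)) (x k) α hα (x (k+1)) (hxX (k+1)) (fun z hz => hxmin k z hz)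
        (x k) (hxX k)
      simp only [sub_self, norm_zero] at hsc
      have hz0 : (2*α)⁻¹ * (0:ℝ) ^ 2 = 0 := by norm_num
      rw [hz0] at hsc
      have hd := pdesc (x k) (x (k+1))
      have hrev : ‖x k - x (k+1)‖ = ‖x (k+1) - x k‖ := norm_sub_rev _ _
      rw [hrev] at hsc
      have hip : ⟪G (x k), x (k+1)⟫ - ⟪G (x k), x k⟫ = ⟪G (x k), x (k+1) - x k⟫ := by
        rw [inner_sub_right]
      have h2t : (2*α)⁻¹ * ‖x (k+1) - x k‖^2 + (2*α)⁻¹ * ‖x (k+1) - x k‖^2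
          = α⁻¹ * ‖x (k+1) - x k‖^2 := by
        field_simp
        ring
      have hprod : (2/τ) * ‖x (k+1) - x k‖^2 + β * ‖x (k+1) - x k‖^2
          ≤ α⁻¹ * ‖x (k+1) - x k‖^2 := by
        nlinarith [sq_nonneg ‖x (k+1) - x k‖, hstepsz]
      linarith [hsc, hd, hip, h2t, hprod]
    have hlbφ : ∀ k, -(∑ i, e 0 i * A i)
        ≤ (∑ i, e s i * f i (blk (x k) i)) + cyclePenalty τ (x k) := by
      intro k
      have h1 : ∀ i, -(e 0 i * A i) ≤ e s i * f i (blk (x k) i) := by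
        intro i
        have h2 := hAlb i _ (hxX k i)
        have h3 : e s i * (-(A i)) ≤ e s i * f i (blk (x k) i) :=
          mul_le_mul_of_nonneg_left h2 (hepos s i).le
        have h4 : e s i ≤ e 0 i := hmono i (Nat.zero_le s)
        have h5 : e s i * A i ≤ e 0 i * A i := mul_le_mul_of_nonneg_right h4 (hA0 i)
        nlinarith
      have h6 := Finset.sum_le_sum (fun i (_ : i ∈ Finset.univ) => h1 i)
      rw [Finset.sum_neg_distrib] at h6
      linarith [ppos (x k), h6]
    have hθ2 : 0 < β * θ s^2 := by
      have := hθpos s; positivity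
    have hiter : ∀ k : ℕ, (∑ i, e s i * f i (blk (x k) i)) + cyclePenalty τ (x k)
        ≤ (∑ i, e s i * f i (blk (x 0) i)) + cyclePenalty τ (x 0) - k * (β * θ s^2) := by
      intro k
      induction k with
      | zero => simp
      | succ k ih =>
        have h1 := hdec k
        have h2 := hcon k
        have h3 : β * θ s^2 ≤ β * ‖x (k+1) - x k‖^2 := by
          have h4 : θ s ^ 2 ≤ ‖x (k+1) - x k‖ ^ 2 := by
            nlinarith [(hθpos s).le, h2]
          exact mul_le_mul_of_nonneg_left h4 hβ0.le
        have hterm : ((k:ℝ)+1) * (β * θ s^2) = (k:ℝ) * (β * θ s^2) + β * θ s^2 := by ring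
        push_cast
        push_cast at ih
        linarith [hterm]
    obtain ⟨k, hk⟩ := exists_nat_gt
      (((∑ i, e s i * f i (blk (x 0) i)) + cyclePenalty τ (x 0) + (∑ i, e 0 i * A i))
        / (β * θ s^2))
    have h5 := hiter k
    have h6 := hlbφ k
    rw [div_lt_iff₀ hθ2] at hk
    linarith [h5, h6, hk]
  -- master inequality
  have master : ∀ s : ℕ, ∀ y, (∀ i, blk y i ∈ X i) →
      (∑ i, e s i * f i (blk (u s) i)) + cyclePenalty τ (u s)
        ≤ (∑ i, e s i * f i (blk y i)) + cyclePenalty τ y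
          + (4/τ + α⁻¹) * θ s * ‖y - u s‖ := by
    intro s y hy
    obtain ⟨xk, hxkX, husX, husmin, husθ⟩ := hu s
    have hce : ∀ i, (0:ℝ) ≤ e s i := fun i => (hepos s i).le
    have hsc := prox_strong_convexity _ hXXconv
      (fun z => ∑ i, e s i * f i (blk z i))
      (fun x' y' t ht0 ht1 => hsum_convex (e s) hce f hf x' y' t ht0 ht1)
      (G xk) xk α hα (u s) husX (fun z hz => husmin z hz) y hy
    have hexp : ‖y - xk‖^2 = ‖y - u s‖^2 + 2*⟪y - u s, u s - xk⟫ + ‖u s - xk‖^2 := by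
      have h0 : y - xk = (y - u s) + (u s - xk) := by abel
      rw [h0, norm_add_sq_real]
      all_goals ring
    have hkey : (2*α)⁻¹ * ‖y - xk‖^2
        = (2*α)⁻¹ * ‖y - u s‖^2 + α⁻¹ * ⟪y - u s, u s - xk⟫ + (2*α)⁻¹ * ‖u s - xk‖^2 := by
      have h2a : α⁻¹ = 2 * (2*α)⁻¹ := by rw [mul_inv]; ring
      rw [hexp, h2a]
      all_goals ring
    rw [hkey] at hsc
    have hsplit : ⟪G xk, y⟫ - ⟪G xk, u s⟫
        = ⟪G (u s), y - u s⟫ + ⟪G xk - G (u s), y - u s⟫ := by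
      rw [← inner_add_left]
      have h0 : G (u s) + (G xk - G (u s)) = G xk := by abel
      rw [h0, ← inner_sub_right]
    have hbound1 : ⟪G (u s), y - u s⟫ ≤ cyclePenalty τ y - cyclePenalty τ (u s) :=
      pconv (u s) y
    have hθ0 : 0 ≤ θ s := (hθpos s).le
    have hbound2 : ⟪G xk - G (u s), y - u s⟫ ≤ (4/τ) * θ s * ‖y - u s‖ := by
      calc ⟪G xk - G (u s), y - u s⟫ ≤ ‖G xk - G (u s)‖ * ‖y - u s‖ :=
            real_inner_le_norm _ _
        _ ≤ (4/τ * ‖xk - u s‖) * ‖y - u s‖ :=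
            mul_le_mul_of_nonneg_right (pLip xk (u s)) (norm_nonneg _)
        _ ≤ (4/τ * θ s) * ‖y - u s‖ := by
            have h4 : ‖xk - u s‖ ≤ θ s := by rw [norm_sub_rev]; exact husθ
            have h5 : (0:ℝ) ≤ 4/τ := by positivity
            exact mul_le_mul_of_nonneg_right
              (mul_le_mul_of_nonneg_left h4 h5) (norm_nonneg _)
        _ = (4/τ) * θ s * ‖y - u s‖ := by ring
    have hainv : (0:ℝ) < α⁻¹ := inv_pos.mpr hα
    have hbound3 : α⁻¹ * ⟪y - u s, u s - xk⟫ ≤ α⁻¹ * (θ s * ‖y - u s‖) := by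
      apply mul_le_mul_of_nonneg_left _ hainv.le
      calc ⟪y - u s, u s - xk⟫ ≤ ‖y - u s‖ * ‖u s - xk‖ := real_inner_le_norm _ _
        _ ≤ ‖y - u s‖ * θ s := mul_le_mul_of_nonneg_left husθ (norm_nonneg _)
        _ = θ s * ‖y - u s‖ := mul_comm _ _
    have hcexp : (4/τ + α⁻¹) * θ s * ‖y - u s‖
        = 4/τ * θ s * ‖y - u s‖ + α⁻¹ * (θ s * ‖y - u s‖) := by ring
    linarith [hsc, hsplit, hbound1, hbound2, hbound3, hcexp]
  -- limits of parameters
  have hm0 : 0 < m := Nat.pos_of_ne_zero (NeZero.ne m)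
  have tendr : ∀ i, Tendsto (fun s => e s i / e s ⟨0, hm0⟩) atTop (nhds 1) := by
    intro i
    rcases eq_or_ne i ⟨0, hm0⟩ with rfl | hne
    · have h0 : (fun s => e s (⟨0, hm0⟩ : Fin m) / e s ⟨0, hm0⟩) = fun _ => (1:ℝ) := by
        funext s; exact div_self (ne_of_gt (hepos s ⟨0, hm0⟩))
      rw [h0]; exact tendsto_const_nhds
    · exact hratio i ⟨0, hm0⟩ hne
  have tendθ : Tendsto θ atTop (nhds 0) := by
    have h1 := (hθ ⟨0, hm0⟩).mul (hzero ⟨0, hm0⟩)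
    simp only [zero_mul] at h1
    have h0 : (fun s => θ s / e s ⟨0, hm0⟩ * e s ⟨0, hm0⟩) = θ := by
      funext s; exact div_mul_cancel₀ _ (ne_of_gt (hepos s ⟨0, hm0⟩))
    rwa [h0] at h1
  -- linear growth of the coercive objective
  have hgrow : ∃ R' : ℝ, 1 ≤ R' ∧ ∀ x, (∀ i, blk x i ∈ X i) → R' ≤ ‖x - xbar‖ →
      (∑ i, f i (blk xbar i)) + ‖x - xbar‖ / R' ≤ ∑ i, f i (blk x i) := by
    obtain ⟨R, hR⟩ := hcoer ((∑ i, f i (blk xbar i)) + 1)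
    refine ⟨max (R + ‖xbar‖) 1, le_max_right _ _, ?_⟩
    intro x hxX hRx
    have hq1 : (1:ℝ) ≤ ‖x - xbar‖ := le_trans (le_max_right _ _) hRx
    have hq0 : (0:ℝ) < ‖x - xbar‖ := by linarith
    have hR'0 : (0:ℝ) < max (R + ‖xbar‖) 1 := lt_of_lt_of_le one_pos (le_max_right _ _)
    set t : ℝ := max (R + ‖xbar‖) 1 / ‖x - xbar‖ with ht
    have ht0 : 0 < t := div_pos hR'0 hq0
    have ht1 : t ≤ 1 := by rw [ht, div_le_one hq0]; exact hRx
    have hwX : ∀ i, blk ((1-t) • xbar + t • x) i ∈ X i := by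
      intro i
      rw [blk_combo]
      exact hXconv i (hxbarX i) (hxX i) (by linarith) ht0.le (by ring)
    have hwsub : ((1-t) • xbar + t • x) - xbar = t • (x - xbar) := by module
    have hwnorm : ‖((1-t) • xbar + t • x) - xbar‖ = max (R + ‖xbar‖) 1 := by
      rw [hwsub, norm_smul, Real.norm_eq_abs, abs_of_pos ht0, ht]
      field_simp
    have hwn : R ≤ ‖(1-t) • xbar + t • x‖ := by
      have h1 : ‖((1-t) • xbar + t • x) - xbar‖ ≤ ‖(1-t) • xbar + t • x‖ + ‖xbar‖ :=
        norm_sub_le _ _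
      have h2 : R + ‖xbar‖ ≤ max (R + ‖xbar‖) 1 := le_max_left _ _
      linarith [hwnorm]
    have hFw := hR _ hwX hwn
    have hcomb := hsum_convex (fun _ => 1) (fun _ => zero_le_one) f hf xbar x t ht0.le ht1
    simp only [one_mul] at hcomb
    have h3 : 1 ≤ t * ((∑ i, f i (blk x i)) - ∑ i, f i (blk xbar i)) := by nlinarith
    have h5 : ‖x - xbar‖ ≤ max (R + ‖xbar‖) 1 * ((∑ i, f i (blk x i)) - ∑ i, f i (blk xbar i)) := by
      calc ‖x - xbar‖ = ‖x - xbar‖ * 1 := by ring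
        _ ≤ ‖x - xbar‖ * (t * ((∑ i, f i (blk x i)) - ∑ i, f i (blk xbar i))) := by nlinarith
        _ = max (R + ‖xbar‖) 1 * ((∑ i, f i (blk x i)) - ∑ i, f i (blk xbar i)) := by
            rw [ht]; field_simp
    have h6 : ‖x - xbar‖ / max (R + ‖xbar‖) 1
        ≤ (∑ i, f i (blk x i)) - ∑ i, f i (blk xbar i) := by
      rw [div_le_iff₀ hR'0]; linarith
    linarith
  obtain ⟨R', hR'1, hgrow⟩ := hgrow
  have hR'0 : (0:ℝ) < R' := lt_of_lt_of_le one_pos hR'1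
  have hc0 : (0:ℝ) < 4/τ + α⁻¹ := by positivity
  -- eventual bound on ‖u s - xbar‖
  have evbound : ∀ᶠ s in atTop, ‖u s - xbar‖
      ≤ max R' (2*R'*((2*(∑ i, 2*|f i (blk xbar i)|) + 2*(∑ i, A i)) - ∑ i, f i (blk xbar i)) + R') := by
    have ev1 : ∀ᶠ s in atTop, ∀ i : Fin m, |e s i / e s ⟨0, hm0⟩ - 1| ≤ 1/2 := by
      rw [eventually_all]
      intro i
      have h1 := Metric.tendsto_nhds.mp (tendr i) (1/2) (by norm_num)
      filter_upwards [h1] with s hs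
      rw [Real.dist_eq] at hs; linarith
    have ev2 : ∀ᶠ s in atTop, (4/τ + α⁻¹) * (θ s / e s ⟨0, hm0⟩) ≤ (4*R')⁻¹ := by
      have h1 : Tendsto (fun s => (4/τ + α⁻¹) * (θ s / e s ⟨0, hm0⟩)) atTop (nhds 0) := by
        have h2 := (hθ ⟨0, hm0⟩).const_mul (4/τ + α⁻¹)
        simpa using h2
      have h3 := Metric.tendsto_nhds.mp h1 ((4*R')⁻¹) (by positivity)
      filter_upwards [h3] with s hs
      rw [Real.dist_eq, sub_zero] at hs
      exact (abs_lt.mp hs).2.le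
    filter_upwards [ev1, ev2] with s h1 h2
    have hqq : ‖xbar - u s‖ = ‖u s - xbar‖ := norm_sub_rev _ _
    have hq0 : (0:ℝ) ≤ ‖u s - xbar‖ := norm_nonneg _
    have hej : (0:ℝ) < e s ⟨0, hm0⟩ := hepos s ⟨0, hm0⟩
    have hM := master s xbar hxbarX
    rw [hqq] at hM
    have hpm : cyclePenalty τ xbar ≤ cyclePenalty τ (u s) := hxbarmin (u s) (huX s)
    have hM2 : (∑ i, e s i * f i (blk (u s) i))
        ≤ (∑ i, e s i * f i (blk xbar i)) + (4/τ + α⁻¹) * θ s * ‖u s - xbar‖ := by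
      linarith
    have hlb : ∀ i : Fin m, e s ⟨0, hm0⟩ * ((1/2) * f i (blk (u s) i) - A i)
        ≤ e s i * f i (blk (u s) i) := by
      intro i
      have hre := abs_le.mp (h1 i)
      have hAi := hAlb i _ (huX s i)
      have hAi0 := hA0 i
      have herw : e s i = e s ⟨0, hm0⟩ * (e s i / e s ⟨0, hm0⟩) := by field_simp
      have hinner : (1/2) * f i (blk (u s) i) - A i
          ≤ (e s i / e s ⟨0, hm0⟩) * f i (blk (u s) i) := by
        nlinarith [hre.1, hre.2, hAi, hAi0]
      calc e s ⟨0, hm0⟩ * ((1/2) * f i (blk (u s) i) - A i)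
          ≤ e s ⟨0, hm0⟩ * ((e s i / e s ⟨0, hm0⟩) * f i (blk (u s) i)) :=
            mul_le_mul_of_nonneg_left hinner hej.le
        _ = e s i * f i (blk (u s) i) := by rw [← mul_assoc, ← herw]
    have hub : ∀ i : Fin m, e s i * f i (blk xbar i)
        ≤ e s ⟨0, hm0⟩ * (2 * |f i (blk xbar i)|) := by
      intro i
      have hre := abs_le.mp (h1 i)
      have hrpos : 0 < e s i / e s ⟨0, hm0⟩ := div_pos (hepos s i) hej
      have habs := le_abs_self (f i (blk xbar i))
      have hinner : (e s i / e s ⟨0, hm0⟩) * f i (blk xbar i) ≤ 2 * |f i (blk xbar i)| := by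
        nlinarith [abs_nonneg (f i (blk xbar i))]
      have herw : e s i = e s ⟨0, hm0⟩ * (e s i / e s ⟨0, hm0⟩) := by field_simp
      calc e s i * f i (blk xbar i)
          = e s ⟨0, hm0⟩ * ((e s i / e s ⟨0, hm0⟩) * f i (blk xbar i)) := by
            rw [← mul_assoc, ← herw]
        _ ≤ e s ⟨0, hm0⟩ * (2 * |f i (blk xbar i)|) :=
            mul_le_mul_of_nonneg_left hinner hej.le
    have hsum_lb : e s ⟨0, hm0⟩ * ((1/2) * (∑ i, f i (blk (u s) i)) - ∑ i, A i)
        ≤ ∑ i, e s i * f i (blk (u s) i) := by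
      have h0 : e s ⟨0, hm0⟩ * ((1/2) * (∑ i, f i (blk (u s) i)) - ∑ i, A i)
          = ∑ i, e s ⟨0, hm0⟩ * ((1/2) * f i (blk (u s) i) - A i) := by
        rw [← Finset.mul_sum, Finset.sum_sub_distrib, ← Finset.mul_sum]
      rw [h0]
      exact Finset.sum_le_sum fun i _ => hlb i
    have hsum_ub : (∑ i, e s i * f i (blk xbar i))
        ≤ e s ⟨0, hm0⟩ * ∑ i, 2 * |f i (blk xbar i)| := by
      rw [Finset.mul_sum]
      exact Finset.sum_le_sum fun i _ => hub i
    have hθterm : (4/τ + α⁻¹) * θ s * ‖u s - xbar‖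
        ≤ e s ⟨0, hm0⟩ * ((4*R')⁻¹ * ‖u s - xbar‖) := by
      have heq : (4/τ + α⁻¹) * θ s * ‖u s - xbar‖
          = e s ⟨0, hm0⟩ * (((4/τ + α⁻¹) * (θ s / e s ⟨0, hm0⟩)) * ‖u s - xbar‖) := by
        field_simp
      rw [heq]
      apply mul_le_mul_of_nonneg_left _ hej.le
      exact mul_le_mul_of_nonneg_right h2 hq0
    have hdiv : (1/2) * (∑ i, f i (blk (u s) i)) - ∑ i, A i
        ≤ (∑ i, 2 * |f i (blk xbar i)|) + (4*R')⁻¹ * ‖u s - xbar‖ := by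
      have h7 : e s ⟨0, hm0⟩ * ((1/2) * (∑ i, f i (blk (u s) i)) - ∑ i, A i)
          ≤ e s ⟨0, hm0⟩ * ((∑ i, 2 * |f i (blk xbar i)|) + (4*R')⁻¹ * ‖u s - xbar‖) := by
        rw [mul_add]
        linarith [hsum_lb, hsum_ub, hθterm, hM2]
      exact le_of_mul_le_mul_left h7 hej
    by_cases hcase : ‖u s - xbar‖ ≤ R'
    · exact le_trans hcase (le_max_left _ _)
    · have hge : R' ≤ ‖u s - xbar‖ := (not_le.mp hcase).le
      have hgr := hgrow (u s) (huX s) hge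
      have h8 : (∑ i, f i (blk xbar i)) + ‖u s - xbar‖ / R'
          ≤ (2*(∑ i, 2*|f i (blk xbar i)|) + 2*(∑ i, A i)) + 2 * ((4*R')⁻¹ * ‖u s - xbar‖) := by
        linarith [hgr, hdiv]
      have h9 : 2 * ((4*R')⁻¹ * ‖u s - xbar‖) = ‖u s - xbar‖ / (2*R') := by
        field_simp; ring
      have h10 : ‖u s - xbar‖ / R' - ‖u s - xbar‖ / (2*R') = ‖u s - xbar‖ / (2*R') := by
        field_simp; ring
      have h11 : ‖u s - xbar‖ / (2*R')
          ≤ (2*(∑ i, 2*|f i (blk xbar i)|) + 2*(∑ i, A i)) - ∑ i, f i (blk xbar i) := by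
        linarith
      have h12 : ‖u s - xbar‖
          ≤ 2*R'*((2*(∑ i, 2*|f i (blk xbar i)|) + 2*(∑ i, A i)) - ∑ i, f i (blk xbar i)) := by
        rw [div_le_iff₀ (by positivity)] at h11
        linarith
      refine le_trans (by linarith [hR'0] : ‖u s - xbar‖
        ≤ 2*R'*((2*(∑ i, 2*|f i (blk xbar i)|) + 2*(∑ i, A i)) - ∑ i, f i (blk xbar i)) + R')
        (le_max_right _ _)
  obtain ⟨N, hN⟩ := eventually_atTop.mp evbound
  have hC40 : (0:ℝ) ≤ max R' (2*R'*((2*(∑ i, 2*|f i (blk xbar i)|) + 2*(∑ i, A i)) - ∑ i, f i (blk xbar i)) + R') :=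
    le_trans hR'0.le (le_max_left _ _)
  have hCbound : ∀ s, ‖u s‖ ≤ ‖xbar‖
      + max R' (2*R'*((2*(∑ i, 2*|f i (blk xbar i)|) + 2*(∑ i, A i)) - ∑ i, f i (blk xbar i)) + R')
      + ∑ t ∈ Finset.range N, ‖u t‖ := by
    intro s
    have hsumnn : (0:ℝ) ≤ ∑ t ∈ Finset.range N, ‖u t‖ :=
      Finset.sum_nonneg fun _ _ => norm_nonneg _
    by_cases hs : N ≤ s
    · have h1 := hN s hs
      have h2 : ‖u s‖ ≤ ‖u s - xbar‖ + ‖xbar‖ := by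
        have := norm_sub_le (u s) xbar  -- not directly; use norm_le_norm_add...
        calc ‖u s‖ = ‖(u s - xbar) + xbar‖ := by rw [sub_add_cancel]
          _ ≤ ‖u s - xbar‖ + ‖xbar‖ := norm_add_le _ _
      linarith
    · have hmem : s ∈ Finset.range N := Finset.mem_range.mpr (not_le.mp hs)
      have h2 : ‖u s‖ ≤ ∑ t ∈ Finset.range N, ‖u t‖ :=
        Finset.single_le_sum (fun _ _ => norm_nonneg _) hmem
      linarith [norm_nonneg xbar]
  set Cb : ℝ := ‖xbar‖
      + max R' (2*R'*((2*(∑ i, 2*|f i (blk xbar i)|) + 2*(∑ i, A i)) - ∑ i, f i (blk xbar i)) + R')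
      + ∑ t ∈ Finset.range N, ‖u t‖ with hCb
  -- per-block bounds on f along the bounded sequence
  have hBex : ∀ i : Fin m, ∃ B : ℝ, 0 ≤ B ∧ ∀ v ∈ X i, ‖v‖ ≤ Cb → |f i v| ≤ B := by
    intro i
    have hcpt : IsCompact (X i ∩ Metric.closedBall 0 Cb) :=
      (isCompact_closedBall (0 : EuclideanSpace ℝ (Fin n)) Cb).inter_left (hXcl i)
    obtain ⟨B, hB⟩ := hcpt.exists_bound_of_continuousOn ((hfc i).continuousOn)
    refine ⟨max B 0, le_max_right _ _, fun v hv hnv => ?_⟩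
    have h1 := hB v ⟨hv, by simpa [Metric.mem_closedBall, dist_zero_right] using hnv⟩
    rw [Real.norm_eq_abs] at h1
    exact le_trans h1 (le_max_left _ _)
  choose B hB0 hBub using hBex
  have hfub : ∀ s i, |f i (blk (u s) i)| ≤ B i := fun s i =>
    hBub i _ (huX s i) (le_trans (norm_blk_le _ i) (hCbound s))
  refine ⟨partI, ⟨Cb, hCbound⟩, ?_⟩
  -- Part (iii)
  intro ubar hclus
  have hfreq : ∀ U ∈ nhds ubar, ∃ᶠ s in atTop, u s ∈ U := mapClusterPt_iff_frequently.mp hclus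
  have hmemX : ∀ i, blk ubar i ∈ X i := by
    intro i
    have hcl : MapClusterPt (blk ubar i) atTop ((fun x => blk x i) ∘ u) :=
      hclus.continuousAt_comp (blk_continuous i).continuousAt
    have hle : Filter.map ((fun x => blk x i) ∘ u) atTop ≤ Filter.principal (X i) := by
      rw [Filter.le_principal_iff, Filter.mem_map]
      exact Filter.Eventually.of_forall fun s => huX s i
    have hcp : ClusterPt (blk ubar i) (Filter.principal (X i)) := hcl.clusterPt.mono hle
    have := mem_closure_iff_clusterPt.mpr hcp
    rwa [(hXcl i).closure_eq] at this
  have hpcont : Continuous (cyclePenalty (m := m) (n := n) τ) := by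
    have h0 : cyclePenalty (m := m) (n := n) τ = fun x => (2*τ)⁻¹ * ‖Tclm m n x‖^2 :=
      funext fun x => cyclePenalty_eq τ x
    rw [h0]
    exact continuous_const.mul (((Tclm m n).continuous.norm).pow 2)
  have hFcont : Continuous fun x : EuclideanSpace ℝ (Fin m × Fin n) => ∑ i, f i (blk x i) :=
    continuous_finset_sum _ fun i _ => (hfc i).comp (blk_continuous i)
  -- error terms tend to zero
  have herr : Tendsto (fun s => (∑ i, e s i * (|f i (blk xbar i)| + B i))
      + (4/τ + α⁻¹) * θ s * (‖xbar‖ + Cb)) atTop (nhds 0) := by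
    have h1 : Tendsto (fun s => ∑ i, e s i * (|f i (blk xbar i)| + B i)) atTop (nhds 0) := by
      have h2 := tendsto_finset_sum (Finset.univ : Finset (Fin m))
        (fun i (_ : i ∈ Finset.univ) => (hzero i).mul_const (|f i (blk xbar i)| + B i))
      simpa using h2
    have h3 : Tendsto (fun s => (4/τ + α⁻¹) * θ s * (‖xbar‖ + Cb)) atTop (nhds 0) := by
      have h4 := (tendθ.const_mul (4/τ + α⁻¹)).mul_const (‖xbar‖ + Cb)
      simpa [mul_assoc] using h4
    simpa using h1.add h3
  have hp_min : ∀ y, (∀ i, blk y i ∈ X i) → cyclePenalty τ ubar ≤ cyclePenalty τ y := by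
    intro y hy
    have h1 : cyclePenalty τ ubar ≤ cyclePenalty τ xbar := by
      apply le_of_forall_pos_le_add
      intro ε hε
      have hev : ∀ᶠ s in atTop, cyclePenalty τ (u s) ≤ cyclePenalty τ xbar + ε/2 := by
        have hsm := Metric.tendsto_nhds.mp herr (ε/2) (by linarith)
        filter_upwards [hsm] with s hs
        rw [Real.dist_eq, sub_zero] at hs
        have habs := (abs_lt.mp hs).2
        have hM := master s xbar hxbarX
        have hb1 : (∑ i, e s i * f i (blk xbar i)) ≤ ∑ i, e s i * |f i (blk xbar i)| :=
          Finset.sum_le_sum fun i _ =>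
            mul_le_mul_of_nonneg_left (le_abs_self _) (hepos s i).le
        have hb2 : -(∑ i, e s i * B i) ≤ ∑ i, e s i * f i (blk (u s) i) := by
          rw [← Finset.sum_neg_distrib]
          apply Finset.sum_le_sum
          intro i _
          have h5 := (abs_le.mp (hfub s i)).1
          nlinarith [(hepos s i).le, h5]
        have hb3 : (4/τ + α⁻¹) * θ s * ‖xbar - u s‖
            ≤ (4/τ + α⁻¹) * θ s * (‖xbar‖ + Cb) := by
          have h6 : ‖xbar - u s‖ ≤ ‖xbar‖ + Cb := by
            calc ‖xbar - u s‖ ≤ ‖xbar‖ + ‖u s‖ := norm_sub_le _ _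
              _ ≤ ‖xbar‖ + Cb := by linarith [hCbound s]
          have h7 : (0:ℝ) ≤ (4/τ + α⁻¹) * θ s := by
            have := (hθpos s).le; positivity
          exact mul_le_mul_of_nonneg_left h6 h7
        have hsum_split : (∑ i, e s i * (|f i (blk xbar i)| + B i))
            = (∑ i, e s i * |f i (blk xbar i)|) + ∑ i, e s i * B i := by
          rw [← Finset.sum_add_distrib]
          exact Finset.sum_congr rfl fun i _ => by ring
        linarith [ppos (u s)]
      have hfr : ∃ᶠ s in atTop, cyclePenalty τ ubar - ε/2 < cyclePenalty τ (u s) := by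
        have hopen : IsOpen {x : EuclideanSpace ℝ (Fin m × Fin n) |
            cyclePenalty τ ubar - ε/2 < cyclePenalty τ x} :=
          isOpen_lt continuous_const hpcont
        have hmem : ubar ∈ {x : EuclideanSpace ℝ (Fin m × Fin n) |
            cyclePenalty τ ubar - ε/2 < cyclePenalty τ x} := by
          simp only [Set.mem_setOf_eq]; linarith
        exact hfreq _ (hopen.mem_nhds hmem)
      obtain ⟨s, hs1, hs2⟩ := (hfr.and_eventually hev).exists
      linarith
    exact le_trans h1 (hxbarmin y hy)
  refine ⟨hmemX, hp_min, ?_⟩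
  -- f-optimality
  intro y hy hymin
  apply le_of_forall_pos_le_add
  intro ε hε
  have hSB0 : (0:ℝ) ≤ ∑ i, B i := Finset.sum_nonneg fun i _ => hB0 i
  have hSBy0 : (0:ℝ) ≤ ∑ i, |f i (blk y i)| := Finset.sum_nonneg fun i _ => abs_nonneg _
  have hδ0 : (0:ℝ) < ε/4 / ((∑ i, B i) + (∑ i, |f i (blk y i)|) + 1) := by positivity
  have ev1 : ∀ᶠ s in atTop, ∀ i : Fin m,
      |e s i / e s ⟨0, hm0⟩ - 1| ≤ ε/4 / ((∑ i, B i) + (∑ i, |f i (blk y i)|) + 1) := by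
    rw [eventually_all]
    intro i
    have h1 := Metric.tendsto_nhds.mp (tendr i) _ hδ0
    filter_upwards [h1] with s hs
    rw [Real.dist_eq] at hs; linarith
  have ev2 : ∀ᶠ s in atTop, (4/τ + α⁻¹) * (θ s / e s ⟨0, hm0⟩) * (‖y‖ + Cb) ≤ ε/4 := by
    have h1 : Tendsto (fun s => (4/τ + α⁻¹) * (θ s / e s ⟨0, hm0⟩) * (‖y‖ + Cb)) atTop (nhds 0) := by
      have h2 := ((hθ ⟨0, hm0⟩).const_mul (4/τ + α⁻¹)).mul_const (‖y‖ + Cb)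
      simpa [mul_assoc] using h2
    have h3 := Metric.tendsto_nhds.mp h1 (ε/4) (by linarith)
    filter_upwards [h3] with s hs
    rw [Real.dist_eq, sub_zero] at hs
    exact (abs_lt.mp hs).2.le
  have hev : ∀ᶠ s in atTop, (∑ i, f i (blk (u s) i)) ≤ (∑ i, f i (blk y i)) + ε/2 := by
    filter_upwards [ev1, ev2] with s h1 h2
    have hej : (0:ℝ) < e s ⟨0, hm0⟩ := hepos s ⟨0, hm0⟩
    have hM := master s y hy
    have hpm : cyclePenalty τ y ≤ cyclePenalty τ (u s) := hymin (u s) (huX s)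
    have hM2 : (∑ i, e s i * f i (blk (u s) i))
        ≤ (∑ i, e s i * f i (blk y i)) + (4/τ + α⁻¹) * θ s * ‖y - u s‖ := by linarith
    set δ : ℝ := ε/4 / ((∑ i, B i) + (∑ i, |f i (blk y i)|) + 1) with hδ
    have hlb : ∀ i : Fin m, e s ⟨0, hm0⟩ * (f i (blk (u s) i) - δ * B i)
        ≤ e s i * f i (blk (u s) i) := by
      intro i
      have hre := abs_le.mp (h1 i)
      have hBi := abs_le.mp (hfub s i)
      have hBi0 := hB0 i
      have herw : e s i = e s ⟨0, hm0⟩ * (e s i / e s ⟨0, hm0⟩) := by field_simp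
      have hinner : f i (blk (u s) i) - δ * B i
          ≤ (e s i / e s ⟨0, hm0⟩) * f i (blk (u s) i) := by
        nlinarith [hre.1, hre.2, hBi.1, hBi.2, hδ0]
      calc e s ⟨0, hm0⟩ * (f i (blk (u s) i) - δ * B i)
          ≤ e s ⟨0, hm0⟩ * ((e s i / e s ⟨0, hm0⟩) * f i (blk (u s) i)) :=
            mul_le_mul_of_nonneg_left hinner hej.le
        _ = e s i * f i (blk (u s) i) := by rw [← mul_assoc, ← herw]
    have hub : ∀ i : Fin m, e s i * f i (blk y i)
        ≤ e s ⟨0, hm0⟩ * (f i (blk y i) + δ * |f i (blk y i)|) := by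
      intro i
      have hre := abs_le.mp (h1 i)
      have habs := abs_le.mp (le_refl |f i (blk y i)|)
      have h4 := le_abs_self (f i (blk y i))
      have h5 := neg_abs_le (f i (blk y i))
      have herw : e s i = e s ⟨0, hm0⟩ * (e s i / e s ⟨0, hm0⟩) := by field_simp
      have hinner : (e s i / e s ⟨0, hm0⟩) * f i (blk y i)
          ≤ f i (blk y i) + δ * |f i (blk y i)| := by
        nlinarith [hre.1, hre.2, abs_nonneg (f i (blk y i)), hδ0]
      calc e s i * f i (blk y i)
          = e s ⟨0, hm0⟩ * ((e s i / e s ⟨0, hm0⟩) * f i (blk y i)) := by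
            rw [← mul_assoc, ← herw]
        _ ≤ e s ⟨0, hm0⟩ * (f i (blk y i) + δ * |f i (blk y i)|) :=
            mul_le_mul_of_nonneg_left hinner hej.le
    have hθterm : (4/τ + α⁻¹) * θ s * ‖y - u s‖ ≤ e s ⟨0, hm0⟩ * (ε/4) := by
      have hny : ‖y - u s‖ ≤ ‖y‖ + Cb := by
        calc ‖y - u s‖ ≤ ‖y‖ + ‖u s‖ := norm_sub_le _ _
          _ ≤ ‖y‖ + Cb := by linarith [hCbound s]
      have heq : (4/τ + α⁻¹) * θ s * ‖y - u s‖
          = e s ⟨0, hm0⟩ * ((4/τ + α⁻¹) * (θ s / e s ⟨0, hm0⟩) * ‖y - u s‖) := by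
        field_simp
      rw [heq]
      apply mul_le_mul_of_nonneg_left _ hej.le
      calc (4/τ + α⁻¹) * (θ s / e s ⟨0, hm0⟩) * ‖y - u s‖
          ≤ (4/τ + α⁻¹) * (θ s / e s ⟨0, hm0⟩) * (‖y‖ + Cb) := by
            apply mul_le_mul_of_nonneg_left hny
            have := (hθpos s).le
            positivity
        _ ≤ ε/4 := h2
    have hsum_lb : e s ⟨0, hm0⟩ * ((∑ i, f i (blk (u s) i)) - δ * ∑ i, B i)
        ≤ ∑ i, e s i * f i (blk (u s) i) := by
      have h0 : e s ⟨0, hm0⟩ * ((∑ i, f i (blk (u s) i)) - δ * ∑ i, B i)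
          = ∑ i, e s ⟨0, hm0⟩ * (f i (blk (u s) i) - δ * B i) := by
        rw [← Finset.mul_sum, Finset.sum_sub_distrib, ← Finset.mul_sum]
      rw [h0]
      exact Finset.sum_le_sum fun i _ => hlb i
    have hsum_ub : (∑ i, e s i * f i (blk y i))
        ≤ e s ⟨0, hm0⟩ * ((∑ i, f i (blk y i)) + δ * ∑ i, |f i (blk y i)|) := by
      have h0 : e s ⟨0, hm0⟩ * ((∑ i, f i (blk y i)) + δ * ∑ i, |f i (blk y i)|)
          = ∑ i, e s ⟨0, hm0⟩ * (f i (blk y i) + δ * |f i (blk y i)|) := by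
        rw [← Finset.mul_sum, Finset.sum_add_distrib, ← Finset.mul_sum]
      rw [h0]
      exact Finset.sum_le_sum fun i _ => hub i
    have hkey : e s ⟨0, hm0⟩ * ((∑ i, f i (blk (u s) i)) - δ * ∑ i, B i)
        ≤ e s ⟨0, hm0⟩ * ((∑ i, f i (blk y i)) + δ * (∑ i, |f i (blk y i)|) + ε/4) := by
      have hrhs : e s ⟨0, hm0⟩ * ((∑ i, f i (blk y i)) + δ * (∑ i, |f i (blk y i)|) + ε/4)
          = e s ⟨0, hm0⟩ * ((∑ i, f i (blk y i)) + δ * (∑ i, |f i (blk y i)|))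
            + e s ⟨0, hm0⟩ * (ε/4) := by ring
      rw [hrhs]
      linarith [hsum_lb, hsum_ub, hθterm, hM2]
    have hdiv := le_of_mul_le_mul_left hkey hej
    have hδsmall : δ * (∑ i, B i) + δ * (∑ i, |f i (blk y i)|) ≤ ε/4 := by
      have h8 : δ * ((∑ i, B i) + (∑ i, |f i (blk y i)|) + 1)
          = ε/4 := by
        rw [hδ]; field_simp
      nlinarith [hδ0]
    linarith
  have hfr : ∃ᶠ s in atTop,
      (∑ i, f i (blk ubar i)) - ε/2 < ∑ i, f i (blk (u s) i) := by
    have hopen : IsOpen {x : EuclideanSpace ℝ (Fin m × Fin n) |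
        (∑ i, f i (blk ubar i)) - ε/2 < ∑ i, f i (blk x i)} :=
      isOpen_lt continuous_const hFcont
    have hmem : ubar ∈ {x : EuclideanSpace ℝ (Fin m × Fin n) |
        (∑ i, f i (blk ubar i)) - ε/2 < ∑ i, f i (blk x i)} := by
      simp only [Set.mem_setOf_eq]; linarith
    exact hfreq _ (hopen.mem_nhds hmem)
  obtain ⟨s, hs1, hs2⟩ := (hfr.and_eventually hev).exists
  linarith
end

section
/- Under assumptions (B1)–(B2), let u^s be a point produced at stage s of method (DPM), i.e. u^s = y_{α,e^s}(x^k) for some x^k with ‖u^s − x^k‖ ≤ θ_s. Then for any x* minimizing f over X*(p): ⟨e^s, F(u^s) − F(x*)⟩ ≤ (4τ^{-1} + α^{-1}) θ_s ‖u^s − x*‖ + p(x*) − p(u^s), where F(x) = (f₁(x₁), …, f_m(x_m)). -/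
open RealInnerProductSpace

set_option linter.unusedSectionVars false
set_option linter.unusedVariables false

noncomputable def shf {m n : ℕ} [NeZero m] (x : EuclideanSpace ℝ (Fin m × Fin n)) :
    EuclideanSpace ℝ (Fin m × Fin n) :=
  (WithLp.equiv 2 _).symm fun q => x (q.1 + 1, q.2)

noncomputable def shb {m n : ℕ} [NeZero m] (x : EuclideanSpace ℝ (Fin m × Fin n)) :
    EuclideanSpace ℝ (Fin m × Fin n) :=
  (WithLp.equiv 2 _).symm fun q => x (q.1 - 1, q.2)

lemma inner_eq {ι : Type*} [Fintype ι] (x y : EuclideanSpace ℝ ι) :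
    ⟪x, y⟫ = ∑ q, x q * y q := by
  simp [PiLp.inner_apply, RCLike.inner_apply]
  exact Finset.sum_congr rfl fun _ _ => mul_comm _ _

lemma normsq_eq {ι : Type*} [Fintype ι] (x : EuclideanSpace ℝ ι) : ‖x‖^2 = ∑ q, (x q)^2 := by
  rw [← real_inner_self_eq_norm_sq, inner_eq]; simp [sq]

variable {m n : ℕ} [NeZero m]

lemma shf_apply (x : EuclideanSpace ℝ (Fin m × Fin n)) (q : Fin m × Fin n) :
    shf x q = x (q.1 + 1, q.2) := rfl
lemma shb_apply (x : EuclideanSpace ℝ (Fin m × Fin n)) (q : Fin m × Fin n) :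
    shb x q = x (q.1 - 1, q.2) := rfl

def cyc {m n : ℕ} [NeZero m] : (Fin m × Fin n) ≃ (Fin m × Fin n) :=
  (Equiv.addRight (1 : Fin m)).prodCongr (Equiv.refl _)

lemma cyc_apply (q : Fin m × Fin n) : (cyc q : Fin m × Fin n) = (q.1 + 1, q.2) := rfl
lemma cyc_symm_apply (q : Fin m × Fin n) : (cyc.symm q : Fin m × Fin n) = (q.1 - 1, q.2) := by
  rw [Equiv.symm_apply_eq, cyc_apply]
  ext <;> simp [sub_add_cancel]

lemma inner_shb_left (a h : EuclideanSpace ℝ (Fin m × Fin n)) :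
    ⟪shb a, h⟫ = ⟪a, shf h⟫ := by
  rw [inner_eq, inner_eq]
  exact Fintype.sum_equiv cyc.symm _ _ (by
    intro q
    have hq : ((q.1 - 1 + 1 : Fin m), q.2) = q := by ext <;> simp [sub_add_cancel]
    rw [cyc_symm_apply]
    show a (q.1 - 1, q.2) * h q = a (q.1 - 1, q.2) * h (q.1 - 1 + 1, q.2)
    rw [hq])

lemma norm_shf (x : EuclideanSpace ℝ (Fin m × Fin n)) : ‖shf x‖ = ‖x‖ := by
  have : ‖shf x‖^2 = ‖x‖^2 := by
    rw [normsq_eq, normsq_eq]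
    exact Fintype.sum_equiv cyc _ _ (by intro q; simp [cyc_apply, shf_apply])
  have h1 := norm_nonneg (shf x); have h2 := norm_nonneg x
  nlinarith

lemma norm_shb (x : EuclideanSpace ℝ (Fin m × Fin n)) : ‖shb x‖ = ‖x‖ := by
  have : ‖shb x‖^2 = ‖x‖^2 := by
    rw [normsq_eq, normsq_eq]
    exact Fintype.sum_equiv cyc.symm _ _ (by intro q; rw [cyc_symm_apply, shb_apply])
  have h1 := norm_nonneg (shb x); have h2 := norm_nonneg x
  nlinarith

lemma shf_sub (x y : EuclideanSpace ℝ (Fin m × Fin n)) : shf (x - y) = shf x - shf y := by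
  ext q; simp [shf_apply, PiLp.sub_apply]
lemma shb_sub (x y : EuclideanSpace ℝ (Fin m × Fin n)) : shb (x - y) = shb x - shb y := by
  ext q; simp [shb_apply, PiLp.sub_apply]

lemma blk_sub (x y : EuclideanSpace ℝ (Fin m × Fin n)) (i : Fin m) :
    blk (x - y) i = blk x i - blk y i := by
  ext j; simp [blk, PiLp.sub_apply]
lemma blk_add (x y : EuclideanSpace ℝ (Fin m × Fin n)) (i : Fin m) :
    blk (x + y) i = blk x i + blk y i := by
  ext j; simp [blk, PiLp.add_apply]
lemma blk_smul (c : ℝ) (x : EuclideanSpace ℝ (Fin m × Fin n)) (i : Fin m) :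
    blk (c • x) i = c • blk x i := by
  ext j; simp [blk, PiLp.smul_apply]

lemma blk_shf (x : EuclideanSpace ℝ (Fin m × Fin n)) (i : Fin m) :
    blk (shf x) i = blk x (i + 1) := by
  ext j; simp [blk, shf_apply]

lemma normsq_blk (x : EuclideanSpace ℝ (Fin m × Fin n)) : ‖x‖^2 = ∑ i, ‖blk x i‖^2 := by
  rw [normsq_eq, Fintype.sum_prod_type]
  congr 1; ext i
  rw [normsq_eq (blk x i)]
  rfl

noncomputable def Tc {m n : ℕ} [NeZero m] (x : EuclideanSpace ℝ (Fin m × Fin n)) :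
    EuclideanSpace ℝ (Fin m × Fin n) := x - shf x
noncomputable def Ac {m n : ℕ} [NeZero m] (x : EuclideanSpace ℝ (Fin m × Fin n)) :
    EuclideanSpace ℝ (Fin m × Fin n) := Tc x - shb (Tc x)

lemma Tc_sub (x y : EuclideanSpace ℝ (Fin m × Fin n)) : Tc (x - y) = Tc x - Tc y := by
  simp only [Tc, shf_sub]; abel

lemma norm_Tc_le (x : EuclideanSpace ℝ (Fin m × Fin n)) : ‖Tc x‖ ≤ 2 * ‖x‖ := by
  calc ‖x - shf x‖ ≤ ‖x‖ + ‖shf x‖ := norm_sub_le _ _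
  _ = 2 * ‖x‖ := by rw [norm_shf]; ring

lemma norm_Ac_le (x : EuclideanSpace ℝ (Fin m × Fin n)) : ‖Ac x‖ ≤ 4 * ‖x‖ := by
  calc ‖Tc x - shb (Tc x)‖ ≤ ‖Tc x‖ + ‖shb (Tc x)‖ := norm_sub_le _ _
  _ = 2 * ‖Tc x‖ := by rw [norm_shb]; ring
  _ ≤ 2 * (2 * ‖x‖) := by have := norm_Tc_le x; linarith
  _ = 4 * ‖x‖ := by ring

lemma Ac_sub (x y : EuclideanSpace ℝ (Fin m × Fin n)) : Ac (x - y) = Ac x - Ac y := by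
  simp only [Ac, Tc_sub, shb_sub]; abel

lemma inner_Tc (a h : EuclideanSpace ℝ (Fin m × Fin n)) :
    ⟪Tc a, Tc h⟫ = ⟪Ac a, h⟫ := by
  rw [show Tc h = h - shf h from rfl, inner_sub_right, ← inner_shb_left,
    show Ac a = Tc a - shb (Tc a) from rfl, inner_sub_left]

lemma pen_eq (τ : ℝ) (x : EuclideanSpace ℝ (Fin m × Fin n)) :
    cyclePenalty τ x = (2 * τ)⁻¹ * ‖Tc x‖ ^ 2 := by
  unfold cyclePenalty
  congr 1
  rw [normsq_blk]
  exact Finset.sum_congr rfl fun i _ => by rw [Tc, blk_sub, blk_shf]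

lemma pen_expand (τ : ℝ) (hτ : τ ≠ 0) (x y : EuclideanSpace ℝ (Fin m × Fin n)) :
    cyclePenalty τ y = cyclePenalty τ x + ⟪τ⁻¹ • Ac x, y - x⟫
      + (2 * τ)⁻¹ * ‖Tc (y - x)‖ ^ 2 := by
  rw [pen_eq, pen_eq]
  have hTy : Tc y = Tc x + Tc (y - x) := by rw [Tc_sub]; abel
  rw [hTy, norm_add_sq_real, real_inner_smul_left, inner_Tc]
  field_simp

lemma hasGrad (τ : ℝ) (hτ : 0 < τ) (x : EuclideanSpace ℝ (Fin m × Fin n)) :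
    HasGradientAt (cyclePenalty τ) (τ⁻¹ • Ac x) x := by
  rw [hasGradientAt_iff_isLittleO]
  have herr : ∀ x' : EuclideanSpace ℝ (Fin m × Fin n),
      cyclePenalty τ x' - cyclePenalty τ x - ⟪τ⁻¹ • Ac x, x' - x⟫
        = (2 * τ)⁻¹ * ‖Tc (x' - x)‖ ^ 2 := fun x' => by
    rw [pen_expand τ hτ.ne' x x']; ring
  rw [Asymptotics.isLittleO_iff]
  intro c hc
  filter_upwards [Metric.ball_mem_nhds x (show (0:ℝ) < c * τ / 2 by positivity)] with x' hx'
  rw [herr x']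
  have hd : ‖x' - x‖ ≤ c * τ / 2 := by
    rw [Metric.mem_ball, dist_eq_norm] at hx'; linarith
  have h1 : ‖Tc (x' - x)‖ ≤ 2 * ‖x' - x‖ := norm_Tc_le _
  have hnn : (0:ℝ) ≤ (2 * τ)⁻¹ * ‖Tc (x' - x)‖ ^ 2 := by positivity
  rw [Real.norm_eq_abs, abs_of_nonneg hnn]
  have key : ‖Tc (x' - x)‖ ^ 2 ≤ 2 * τ * (c * ‖x' - x‖) := by
    nlinarith [norm_nonneg (Tc (x' - x)), norm_nonneg (x' - x), hτ, hc]
  calc (2 * τ)⁻¹ * ‖Tc (x' - x)‖ ^ 2 ≤ (2 * τ)⁻¹ * (2 * τ * (c * ‖x' - x‖)) :=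
        mul_le_mul_of_nonneg_left key (by positivity)
  _ = c * ‖x' - x‖ := by field_simp

/-- Key estimate (4.6) for a stage of method (DPM): for any solution x* of the
sequential problem, ⟨e, F(uˢ) − F(x*)⟩ ≤ (4/τ + 1/α) θ_s ‖uˢ − x*‖ + p(x*) − p(uˢ). -/
theorem DPM_stage_estimate {m n : ℕ} [NeZero m]
    (hm : 3 ≤ m) (τ : ℝ) (hτ : 0 < τ)
    (X : Fin m → Set (EuclideanSpace ℝ (Fin n)))
    (hXne : ∀ i, (X i).Nonempty) (hXconv : ∀ i, Convex ℝ (X i))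
    (hXcl : ∀ i, IsClosed (X i))
    (f : Fin m → EuclideanSpace ℝ (Fin n) → ℝ)
    (hf : ∀ i, ConvexOn ℝ Set.univ (f i))
    (G : EuclideanSpace ℝ (Fin m × Fin n) → EuclideanSpace ℝ (Fin m × Fin n))
    (hG : ∀ x, HasGradientAt (cyclePenalty (m := m) (n := n) τ) (G x) x)
    (α : ℝ) (hα : 0 < α) (θ : ℝ) (hθ : 0 < θ)
    (e : Fin m → ℝ) (hepos : ∀ i, 0 < e i)
    -- u = y_{α,e}(xk) is produced at the stage, with ‖u − xk‖ ≤ θ :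
    (xk u : EuclideanSpace ℝ (Fin m × Fin n))
    (hxk : ∀ i, blk xk i ∈ X i) (hufeas : ∀ i, blk u i ∈ X i)
    (humin : ∀ z, (∀ i, blk z i ∈ X i) →
        (∑ i, e i * f i (blk u i)) + ⟪G xk, u⟫ + (2 * α)⁻¹ * ‖u - xk‖ ^ 2 ≤
          (∑ i, e i * f i (blk z i)) + ⟪G xk, z⟫ + (2 * α)⁻¹ * ‖z - xk‖ ^ 2)
    (hclose : ‖u - xk‖ ≤ θ)
    -- x* solves min { f(x) : x ∈ argmin_X p } :
    (xs : EuclideanSpace ℝ (Fin m × Fin n)) (hxsfeas : ∀ i, blk xs i ∈ X i)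
    (hxsp : ∀ y, (∀ i, blk y i ∈ X i) → cyclePenalty τ xs ≤ cyclePenalty τ y)
    (hxsf : ∀ y, (∀ i, blk y i ∈ X i) →
        (∀ w, (∀ i, blk w i ∈ X i) → cyclePenalty τ y ≤ cyclePenalty τ w) →
        ∑ i, f i (blk xs i) ≤ ∑ i, f i (blk y i)) :
    ∑ i, e i * (f i (blk u i) - f i (blk xs i)) ≤
      (4 / τ + α⁻¹) * θ * ‖u - xs‖ + cyclePenalty τ xs - cyclePenalty τ u := by
  have hGxk : G xk = τ⁻¹ • Ac xk := (hG xk).unique (hasGrad τ hτ xk)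
  have hGu : G u = τ⁻¹ • Ac u := (hG u).unique (hasGrad τ hτ u)
  set A0 := ∑ i, e i * f i (blk u i) with hA0
  set B0 := ∑ i, e i * f i (blk xs i) with hB0
  set Gd := (⟪G xk, xs - u⟫ : ℝ) with hGddef
  set I := (⟪u - xk, xs - u⟫ : ℝ) with hIdef
  set N := ‖xs - u‖ with hNdef
  -- key step inequality for each t ∈ (0,1]
  have hstep : ∀ t : ℝ, 0 < t → t ≤ 1 →
      A0 - B0 - Gd ≤ α⁻¹ * I + (2 * α)⁻¹ * t * N ^ 2 := by
    intro t ht ht1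
    set z := u + t • (xs - u) with hz
    have hbz : ∀ i, blk z i = (1 - t) • blk u i + t • blk xs i := by
      intro i
      rw [hz, blk_add, blk_smul, blk_sub, smul_sub, sub_smul, one_smul]
      abel
    have hzfeas : ∀ i, blk z i ∈ X i := by
      intro i
      rw [hbz i]
      exact hXconv i (hufeas i) (hxsfeas i) (by linarith) ht.le (by ring)
    have hmin := humin z hzfeas
    have hsum : ∑ i, e i * f i (blk z i) ≤ (1 - t) * A0 + t * B0 := by
      have h1 : ∀ i : Fin m, e i * f i (blk z i) ≤
          e i * ((1 - t) * f i (blk u i) + t * f i (blk xs i)) := by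
        intro i
        apply mul_le_mul_of_nonneg_left _ (hepos i).le
        have := (hf i).2 (Set.mem_univ (blk u i)) (Set.mem_univ (blk xs i))
          (by linarith : (0:ℝ) ≤ 1 - t) ht.le (by ring)
        rw [hbz i]
        simpa using this
      calc ∑ i, e i * f i (blk z i)
          ≤ ∑ i, e i * ((1 - t) * f i (blk u i) + t * f i (blk xs i)) :=
            Finset.sum_le_sum fun i _ => h1 i
        _ = (1 - t) * A0 + t * B0 := by
            rw [hA0, hB0, Finset.mul_sum, Finset.mul_sum, ← Finset.sum_add_distrib]
            exact Finset.sum_congr rfl fun i _ => by ring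
    have e1 : (⟪G xk, z⟫ : ℝ) = ⟪G xk, u⟫ + t * Gd := by
      rw [hz, inner_add_right, real_inner_smul_right, hGddef]
    have e2 : ‖z - xk‖ ^ 2 = ‖u - xk‖ ^ 2 + 2 * (t * I) + t ^ 2 * N ^ 2 := by
      have hzk : z - xk = (u - xk) + t • (xs - u) := by rw [hz]; abel
      rw [hzk, norm_add_sq_real, real_inner_smul_right, norm_smul,
        Real.norm_eq_abs, mul_pow, sq_abs, hIdef, hNdef]
    have hfromin : A0 + ⟪G xk, u⟫ + (2 * α)⁻¹ * ‖u - xk‖ ^ 2 ≤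
        ((1 - t) * A0 + t * B0) + (⟪G xk, u⟫ + t * Gd)
          + (2 * α)⁻¹ * (‖u - xk‖ ^ 2 + 2 * (t * I) + t ^ 2 * N ^ 2) := by
      calc A0 + ⟪G xk, u⟫ + (2 * α)⁻¹ * ‖u - xk‖ ^ 2
          ≤ (∑ i, e i * f i (blk z i)) + ⟪G xk, z⟫ + (2 * α)⁻¹ * ‖z - xk‖ ^ 2 := hmin
        _ ≤ _ := by rw [e1, e2]; linarith
    have hc : α⁻¹ = 2 * (2 * α)⁻¹ := by field_simp
    rw [← mul_le_mul_iff_right₀ ht, hc]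
    ring_nf at hfromin ⊢
    linarith [hfromin]
  -- pass to the limit t → 0⁺
  have hlimit : A0 - B0 - Gd ≤ α⁻¹ * I := by
    apply le_of_forall_pos_le_add
    intro ε hε
    rcases eq_or_ne N 0 with hN0 | hN0
    · have h := hstep 1 one_pos le_rfl
      rw [hN0] at h
      simp at h
      linarith
    · have hNpos : 0 < (2 * α)⁻¹ * N ^ 2 := by
        have : N ≠ 0 := hN0
        positivity
      have ht : 0 < min 1 (ε / ((2 * α)⁻¹ * N ^ 2)) := lt_min one_pos (by positivity)
      have h := hstep _ ht (min_le_left _ _)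
      have hb : (2 * α)⁻¹ * min 1 (ε / ((2 * α)⁻¹ * N ^ 2)) * N ^ 2 ≤ ε := by
        have hle : min 1 (ε / ((2 * α)⁻¹ * N ^ 2)) ≤ ε / ((2 * α)⁻¹ * N ^ 2) :=
          min_le_right _ _
        calc (2 * α)⁻¹ * min 1 (ε / ((2 * α)⁻¹ * N ^ 2)) * N ^ 2
            = min 1 (ε / ((2 * α)⁻¹ * N ^ 2)) * ((2 * α)⁻¹ * N ^ 2) := by ring
          _ ≤ (ε / ((2 * α)⁻¹ * N ^ 2)) * ((2 * α)⁻¹ * N ^ 2) :=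
              mul_le_mul_of_nonneg_right hle hNpos.le
          _ = ε := div_mul_cancel₀ _ hNpos.ne'
      linarith
  have hIbound : I ≤ θ * ‖u - xs‖ := by
    calc I ≤ ‖u - xk‖ * ‖xs - u‖ := real_inner_le_norm _ _
      _ ≤ θ * ‖xs - u‖ := mul_le_mul_of_nonneg_right hclose (norm_nonneg _)
      _ = θ * ‖u - xs‖ := by rw [norm_sub_rev]
  -- gradient inequality at u
  have hb1 : (⟪G u, xs - u⟫ : ℝ) ≤ cyclePenalty τ xs - cyclePenalty τ u := by
    rw [hGu]
    have hpe := pen_expand τ hτ.ne' u xs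
    have hnn : (0:ℝ) ≤ (2 * τ)⁻¹ * ‖Tc (xs - u)‖ ^ 2 := by positivity
    linarith
  -- Lipschitz bound on gradient difference
  have hb2 : (⟪G xk - G u, xs - u⟫ : ℝ) ≤ 4 / τ * θ * ‖u - xs‖ := by
    have hGdiff : G xk - G u = τ⁻¹ • Ac (xk - u) := by
      rw [hGxk, hGu, ← smul_sub, Ac_sub]
    have hnorm : ‖G xk - G u‖ ≤ 4 / τ * θ := by
      rw [hGdiff, norm_smul, Real.norm_eq_abs, abs_of_nonneg (inv_nonneg.mpr hτ.le)]
      have h4 := norm_Ac_le (xk - u)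
      have hku : ‖xk - u‖ ≤ θ := by rw [norm_sub_rev]; exact hclose
      calc τ⁻¹ * ‖Ac (xk - u)‖ ≤ τ⁻¹ * (4 * ‖xk - u‖) :=
            mul_le_mul_of_nonneg_left h4 (by positivity)
        _ ≤ τ⁻¹ * (4 * θ) := mul_le_mul_of_nonneg_left (by linarith) (by positivity)
        _ = 4 / τ * θ := by rw [div_eq_mul_inv]; ring
    calc (⟪G xk - G u, xs - u⟫ : ℝ) ≤ ‖G xk - G u‖ * ‖xs - u‖ := real_inner_le_norm _ _
      _ ≤ (4 / τ * θ) * ‖xs - u‖ :=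
          mul_le_mul_of_nonneg_right hnorm (norm_nonneg _)
      _ = 4 / τ * θ * ‖u - xs‖ := by rw [norm_sub_rev]
  have hGdsplit : Gd = ⟪G u, xs - u⟫ + ⟪G xk - G u, xs - u⟫ := by
    rw [hGddef, ← inner_add_left, add_sub_cancel]
  have hlhs : ∑ i, e i * (f i (blk u i) - f i (blk xs i)) = A0 - B0 := by
    rw [hA0, hB0, ← Finset.sum_sub_distrib]
    exact Finset.sum_congr rfl fun i _ => by ring
  rw [hlhs]
  have hImul : α⁻¹ * I ≤ α⁻¹ * (θ * ‖u - xs‖) :=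
    mul_le_mul_of_nonneg_left hIbound (inv_nonneg.mpr hα.le)
  have hsplit : (4 / τ + α⁻¹) * θ * ‖u - xs‖
      = 4 / τ * θ * ‖u - xs‖ + α⁻¹ * (θ * ‖u - xs‖) := by ring
  linarith [hGdsplit, hb1, hb2, hlimit, hImul]
end
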